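/- Let X be a compact metrizable space with a continuous ℝⁿ-action T whose fixed-point set Fix(X,T) = {x : T^t x = x for all t} topologically embeds into [0,1] via ι. Let 𝒞 be the set of ℝⁿ-equivariant continuous maps f : X → Lip₁(ℝⁿ,[0,1]) (with the shift action on the target) such that f(x) is the constant function ι(x) for every x ∈ Fix(X,T). Then for every δ ∈ (0,1), 𝒞 contains a map f with f(x) ∈ Lip_δ(ℝⁿ,[0,1]) for all x ∈ X; in particular 𝒞 is nonempty. -/
import Mathlib


open Set Topology

/-- If the fixed-point set of a continuous `ℝⁿ`-action `T` on a compact metrizable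
space `X` embeds into `[0,1]` via `ι`, then for every `δ ∈ (0,1)` there is an
equivariant continuous map `f : X → Lip₁(ℝⁿ,[0,1])` with `f(x)` constantly `ι(x)`
on fixed points and `f(x) ∈ Lip_δ(ℝⁿ,[0,1])` for all `x`; in particular the space
`𝒞` of such maps is nonempty. -/
theorem stmt_18 {n : ℕ} {X : Type*} [TopologicalSpace X] [CompactSpace X]
    [TopologicalSpace.MetrizableSpace X]
    (T : EuclideanSpace ℝ (Fin n) → X → X)
    (hcont : Continuous fun p : EuclideanSpace ℝ (Fin n) × X => T p.1 p.2)
    (h0 : ∀ x, T 0 x = x)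
    (hadd : ∀ s t x, T (s + t) x = T s (T t x))
    (ι : X → ℝ)
    (hιr : ∀ x : X, (∀ t, T t x = x) → ι x ∈ Set.Icc (0:ℝ) 1)
    (hι : Topology.IsEmbedding fun x : {x : X // ∀ t, T t x = x} => ι x.1)
    (δ : ℝ) (hδ0 : 0 < δ) (hδ1 : δ < 1) :
    ∃ f : X → EuclideanSpace ℝ (Fin n) → ℝ,
      (∀ x t, f x t ∈ Set.Icc (0:ℝ) 1) ∧
      (∀ x t u, |f x t - f x u| ≤ δ * dist t u) ∧
      Continuous (fun p : X × EuclideanSpace ℝ (Fin n) => f p.1 p.2) ∧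
      (∀ t x u, f (T t x) u = f x (u + t)) ∧
      (∀ x : X, (∀ t, T t x = x) → ∀ t, f x t = ι x) := by
  classical
  letI : MetricSpace X := TopologicalSpace.metrizableSpaceMetric X
  -- The fixed-point set is closed, hence compact.
  have hTc : ∀ t : EuclideanSpace ℝ (Fin n), Continuous fun x => T t x := fun t =>
    hcont.comp (continuous_const.prodMk continuous_id)
  have hFixClosed : IsClosed {x : X | ∀ t, T t x = x} := by
    have heq : {x : X | ∀ t, T t x = x} = ⋂ t : EuclideanSpace ℝ (Fin n), {x | T t x = x} := by
      ext x; simp [Set.mem_iInter]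
    rw [heq]
    exact isClosed_iInter fun t => isClosed_eq (hTc t) continuous_id
  haveI : CompactSpace {x : X // ∀ t, T t x = x} :=
    isCompact_iff_compactSpace.mp hFixClosed.isCompact
  -- Tietze extension of `ι` from the fixed-point set to all of `X`, with values in `[0,1]`.
  obtain ⟨g, hg01, hge⟩ :=
    BoundedContinuousFunction.exists_extension_forall_mem_Icc_of_isClosedEmbedding
      (BoundedContinuousFunction.mkOfCompact ⟨fun x : {x : X // ∀ t, T t x = x} => ι x.1,
        hι.continuous⟩)
      (fun x => hιr x.1 x.2) zero_le_one hFixClosed.isClosedEmbedding_subtypeVal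
  set h : X → ℝ := fun x => g x with hdefh
  have hhcont : Continuous h := g.continuous
  have hh01 : ∀ x, h x ∈ Set.Icc (0:ℝ) 1 := hg01
  have hhfix : ∀ x (hx : ∀ t, T t x = x), h x = ι x := fun x hx => congr_fun hge ⟨x, hx⟩
  -- The inf-convolution.
  set F : X → EuclideanSpace ℝ (Fin n) → ℝ :=
    fun x t => ⨅ s : EuclideanSpace ℝ (Fin n), (h (T s x) + δ * dist s t) with hdefF
  have hbdd : ∀ x t, BddBelow (Set.range fun s : EuclideanSpace ℝ (Fin n) =>
      h (T s x) + δ * dist s t) := by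
    intro x t
    refine ⟨0, ?_⟩
    rintro _ ⟨s, rfl⟩
    exact add_nonneg (hh01 (T s x)).1 (mul_nonneg hδ0.le dist_nonneg)
  have hF_le : ∀ x t, F x t ≤ h (T t x) := by
    intro x t
    have := ciInf_le (hbdd x t) t
    simpa using this
  have hF0 : ∀ x t, 0 ≤ F x t := fun x t =>
    le_ciInf fun s => add_nonneg (hh01 (T s x)).1 (mul_nonneg hδ0.le dist_nonneg)
  have hF1 : ∀ x t, F x t ≤ 1 := fun x t => (hF_le x t).trans (hh01 (T t x)).2
  -- one-sided Lipschitz estimate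
  have key : ∀ x (t u : EuclideanSpace ℝ (Fin n)), F x t ≤ F x u + δ * dist t u := by
    intro x t u
    rw [← sub_le_iff_le_add]
    refine le_ciInf fun s => ?_
    rw [sub_le_iff_le_add]
    have h1 : dist s t ≤ dist s u + dist t u := by
      calc dist s t ≤ dist s u + dist u t := dist_triangle s u t
        _ = dist s u + dist t u := by rw [dist_comm u t]
    have h2 := mul_le_mul_of_nonneg_left h1 hδ0.le
    rw [mul_add] at h2
    calc F x t ≤ h (T s x) + δ * dist s t := ciInf_le (hbdd x t) s
      _ ≤ h (T s x) + δ * dist s u + δ * dist t u := by linarith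
  have hFlip : ∀ x (t u : EuclideanSpace ℝ (Fin n)), |F x t - F x u| ≤ δ * dist t u := by
    intro x t u
    rw [abs_sub_le_iff]
    constructor
    · linarith [key x t u]
    · have := key x u t
      rw [dist_comm u t] at this
      linarith
  -- equivariance
  have hequiv : ∀ (t : EuclideanSpace ℝ (Fin n)) x (u : EuclideanSpace ℝ (Fin n)),
      F (T t x) u = F x (u + t) := by
    intro t x u
    have h1 : ∀ s : EuclideanSpace ℝ (Fin n), h (T s (T t x)) + δ * dist s u
        = h (T (s + t) x) + δ * dist (s + t) (u + t) := by
      intro s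
      rw [← hadd, dist_add_right]
    calc F (T t x) u
        = ⨅ s : EuclideanSpace ℝ (Fin n), (h (T (s + t) x) + δ * dist (s + t) (u + t)) :=
          iInf_congr h1
      _ = F x (u + t) := by
          have hc : (fun s : EuclideanSpace ℝ (Fin n) =>
                h (T (s + t) x) + δ * dist (s + t) (u + t))
              = (fun s' : EuclideanSpace ℝ (Fin n) => h (T s' x) + δ * dist s' (u + t)) ∘
                (fun s => s + t) := rfl
          have hr : Set.range (fun s : EuclideanSpace ℝ (Fin n) => s + t) = Set.univ :=
            Set.range_eq_univ.mpr fun s => ⟨s - t, by abel⟩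
          have hre : (Set.range fun s : EuclideanSpace ℝ (Fin n) =>
                h (T (s + t) x) + δ * dist (s + t) (u + t))
              = Set.range fun s' : EuclideanSpace ℝ (Fin n) =>
                h (T s' x) + δ * dist s' (u + t) := by
            rw [hc, Set.range_comp, hr, Set.image_univ]
          exact congrArg sInf hre
  -- fixed points
  have hfix : ∀ x, (∀ t, T t x = x) → ∀ t, F x t = ι x := by
    intro x hx t
    have hval : h x = ι x := hhfix x hx
    refine le_antisymm ?_ ?_
    · calc F x t ≤ h (T t x) := hF_le x t
        _ = ι x := by rw [hx t, hval]
    · refine le_ciInf fun s => ?_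
      rw [hx s, hval]
      have := mul_nonneg hδ0.le (dist_nonneg (x := s) (y := t))
      linarith
  -- continuity
  set R : ℝ := 2 / δ with hRdef
  have hRpos : 0 < R := by positivity
  have hδR : δ * R = 2 := by rw [hRdef]; field_simp
  have claimA : ∀ (x y : X) (t : EuclideanSpace ℝ (Fin n)) (ε : ℝ), 0 < ε →
      (∀ s : EuclideanSpace ℝ (Fin n), dist s t ≤ R → |h (T s x) - h (T s y)| ≤ ε) →
      F x t ≤ F y t + ε := by
    intro x y t ε hε hcl
    rw [← sub_le_iff_le_add]
    refine le_ciInf fun s => ?_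
    rw [sub_le_iff_le_add]
    by_cases hs : dist s t ≤ R
    · have h1 : h (T s x) - h (T s y) ≤ ε := (abs_le.mp (hcl s hs)).2
      calc F x t ≤ h (T s x) + δ * dist s t := ciInf_le (hbdd x t) s
        _ ≤ h (T s y) + δ * dist s t + ε := by linarith
    · push_neg at hs
      have h2 : 2 ≤ δ * dist s t := by
        rw [← hδR]; exact mul_le_mul_of_nonneg_left hs.le hδ0.le
      have h3 := hF1 x t
      have h4 := (hh01 (T s y)).1
      linarith
  have hcont2 : Continuous fun p : X × EuclideanSpace ℝ (Fin n) => F p.1 p.2 := by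
    rw [Metric.continuous_iff]
    rintro ⟨x₀, t₀⟩ ε hε
    have hK : IsCompact ((Set.univ : Set X) ×ˢ Metric.closedBall t₀ (R + 1)) :=
      isCompact_univ.prod (isCompact_closedBall _ _)
    have hGc : Continuous fun p : X × EuclideanSpace ℝ (Fin n) => h (T p.2 p.1) :=
      hhcont.comp (hcont.comp (continuous_snd.prodMk continuous_fst))
    have hUC := hK.uniformContinuousOn_of_continuous hGc.continuousOn
    rw [Metric.uniformContinuousOn_iff] at hUC
    obtain ⟨d, hd, hduc⟩ := hUC (ε / 2) (by linarith)
    refine ⟨min d (min 1 (ε / (2 * δ))), lt_min hd (lt_min one_pos (by positivity)), ?_⟩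
    rintro ⟨x, t⟩ hdist
    have hmax : max (dist x x₀) (dist t t₀) < min d (min 1 (ε / (2 * δ))) := by
      rw [Prod.dist_eq] at hdist; exact hdist
    have hdx := lt_of_le_of_lt (le_max_left _ _) hmax
    have hdt := lt_of_le_of_lt (le_max_right _ _) hmax
    have hdxd : dist x x₀ < d := lt_of_lt_of_le hdx (min_le_left _ _)
    have hdtε : dist t t₀ < ε / (2 * δ) :=
      lt_of_lt_of_le hdt ((min_le_right _ _).trans (min_le_right _ _))
    -- compare h(T s x) and h(T s x₀) for s near t₀
    have hcl : ∀ s : EuclideanSpace ℝ (Fin n), dist s t₀ ≤ R →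
        |h (T s x) - h (T s x₀)| ≤ ε / 2 := by
      intro s hs
      have hmem : ((x, s) : X × EuclideanSpace ℝ (Fin n)) ∈
          (Set.univ : Set X) ×ˢ Metric.closedBall t₀ (R + 1) := by
        refine ⟨Set.mem_univ _, ?_⟩
        simp only [Metric.mem_closedBall]
        linarith
      have hmem₀ : ((x₀, s) : X × EuclideanSpace ℝ (Fin n)) ∈
          (Set.univ : Set X) ×ˢ Metric.closedBall t₀ (R + 1) := by
        refine ⟨Set.mem_univ _, ?_⟩
        simp only [Metric.mem_closedBall]
        linarith
      have hdp : dist ((x, s) : X × EuclideanSpace ℝ (Fin n)) (x₀, s) = dist x x₀ := by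
        simp [Prod.dist_eq, dist_nonneg]
      have := hduc (x, s) hmem (x₀, s) hmem₀ (by rw [hdp]; exact hdxd)
      rw [Real.dist_eq] at this
      exact this.le
    have hA1 : F x t₀ ≤ F x₀ t₀ + ε / 2 := claimA x x₀ t₀ (ε / 2) (by linarith) hcl
    have hA2 : F x₀ t₀ ≤ F x t₀ + ε / 2 := by
      refine claimA x₀ x t₀ (ε / 2) (by linarith) fun s hs => ?_
      rw [abs_sub_comm]
      exact hcl s hs
    have hlip := hFlip x t t₀
    have hlt : δ * dist t t₀ < ε / 2 := by
      have := mul_lt_mul_of_pos_left hdtε hδ0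
      rw [mul_div_assoc'] at this
      calc δ * dist t t₀ < δ * ε / (2 * δ) := this
        _ = ε / 2 := by field_simp
    have htri : |F x t - F x₀ t₀| ≤ |F x t - F x t₀| + |F x t₀ - F x₀ t₀| :=
      abs_sub_le _ _ _
    have habs : |F x t₀ - F x₀ t₀| ≤ ε / 2 := abs_sub_le_iff.mpr ⟨by linarith, by linarith⟩
    rw [Real.dist_eq]
    calc |F x t - F x₀ t₀| ≤ |F x t - F x t₀| + |F x t₀ - F x₀ t₀| := htri
      _ ≤ δ * dist t t₀ + ε / 2 := add_le_add hlip habs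
      _ < ε / 2 + ε / 2 := by linarith
      _ = ε := by ring
  exact ⟨F, fun x t => ⟨hF0 x t, hF1 x t⟩, hFlip, hcont2, hequiv, hfix⟩
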